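/- arXiv:1707.03281 — 8 statements merged into one kernel-verified Lean document; each statement's English description precedes it below -/
import Mathlib

section
/- Let X be a first countable topological space and I a P-ideal on ω. If a sequence (x_n) in X is I-convergent to ℓ, then (x_n) is I*-convergent to ℓ, i.e., there exists A ∈ I* such that the subsequence of (x_n) indexed by A converges to ℓ in the ordinary sense. -/
open Filter Topology

/-- An ideal on ω: closed under subsets and finite unions, contains all singletons,
and is not the whole power set. -/
def IsIdeal (I : Set (Set ℕ)) : Prop :=
  (∀ ⦃A B : Set ℕ⦄, A ∈ I → B ⊆ A → B ∈ I) ∧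
  (∀ ⦃A B : Set ℕ⦄, A ∈ I → B ∈ I → A ∪ B ∈ I) ∧
  (∀ n : ℕ, ({n} : Set ℕ) ∈ I) ∧ (Set.univ : Set ℕ) ∉ I

/-- A P-ideal. -/
def IsPIdeal (I : Set (Set ℕ)) : Prop :=
  IsIdeal I ∧ ∀ A : ℕ → Set ℕ, (∀ n, A n ∈ I) → ∃ B ∈ I, ∀ n, (A n \ B).Finite

/-- A G-ideal. -/
def IsGIdeal (I : Set (Set ℕ)) : Prop :=
  IsIdeal I ∧ ∀ a : ℕ → ℕ, StrictMono a → (Set.range a)ᶜ ∈ I →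
    ∀ B : Set ℕ, ((a '' B)ᶜ ∈ I ↔ Bᶜ ∈ I)

variable {X : Type*} [TopologicalSpace X]

/-- `I`-convergence of a sequence to a point. -/
def IConv (I : Set (Set ℕ)) (x : ℕ → X) (l : X) : Prop :=
  ∀ U ∈ 𝓝 l, {n | x n ∉ U} ∈ I

/-- `I*`-convergence: some subsequence indexed by a set of the dual filter converges. -/
def IStarConv (I : Set (Set ℕ)) (x : ℕ → X) (l : X) : Prop :=
  ∃ e : ℕ → ℕ, StrictMono e ∧ (Set.range e)ᶜ ∈ I ∧ Tendsto (x ∘ e) atTop (𝓝 l)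

/-- The set of `I`-cluster points of a sequence. -/
def IClusterPts (I : Set (Set ℕ)) (x : ℕ → X) : Set X :=
  {l | ∀ U ∈ 𝓝 l, {n | x n ∈ U} ∉ I}

/-- The set of `I`-limit points of a sequence. -/
def ILimitPts (I : Set (Set ℕ)) (x : ℕ → X) : Set X :=
  {l | ∃ e : ℕ → ℕ, StrictMono e ∧ Set.range e ∉ I ∧ Tendsto (x ∘ e) atTop (𝓝 l)}

/-! Take a countable basis `(U k)` of `𝓝 l`. Each `{n | x n ∉ U k}` lies in `I`, so the P-ideal
property gives a single `B ∈ I` almost containing all of them. Along `Bᶜ` the sequence then leaves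
each `U k` only finitely often, and `Bᶜ` is infinite because `I` is proper, so enumerating `Bᶜ`
increasingly gives the required subsequence. -/

namespace IsIdeal

variable {I : Set (Set ℕ)}

theorem finite_mem (hI : IsIdeal I) {S : Set ℕ} (hS : S.Finite) : S ∈ I := by
  obtain ⟨hsub, hun, hsing, -⟩ := hI
  induction S, hS using Set.Finite.induction_on with
  | empty => exact hsub (hsing 0) (Set.empty_subset _)
  | insert _ _ ih => exact Set.insert_eq .. ▸ hun (hsing _) ih

theorem compl_infinite_of_mem (hI : IsIdeal I) {B : Set ℕ} (hB : B ∈ I) : Bᶜ.Infinite :=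
  fun hfin => hI.2.2.2 (Set.union_compl_self B ▸ hI.2.1 hB (hI.finite_mem hfin))

theorem iStarConv_of_tendsto_cofinite_inf_principal_compl (hI : IsIdeal I) {x : ℕ → X} {l : X}
    {B : Set ℕ} (hB : B ∈ I) (hx : Tendsto x (cofinite ⊓ 𝓟 Bᶜ) (𝓝 l)) : IStarConv I x l := by
  have hinf : {n | n ∈ Bᶜ}.Infinite := hI.compl_infinite_of_mem hB
  have hmono := Nat.nth_strictMono hinf
  refine ⟨Nat.nth (· ∈ Bᶜ), hmono, ?_, hx.comp ?_⟩
  · rwa [Nat.range_nth_of_infinite hinf, Set.ofPred_mem_eq, compl_compl]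
  · exact tendsto_inf.2 ⟨hmono.tendsto_atTop.mono_right Nat.cofinite_eq_atTop.ge,
      tendsto_principal.2 (Eventually.of_forall (Nat.nth_mem_of_infinite hinf))⟩

end IsIdeal

theorem IsPIdeal.exists_mem_tendsto_cofinite_inf_principal_compl {I : Set (Set ℕ)}
    (hI : IsPIdeal I) {α : Type*} {f : ℕ → α} {L : Filter α} [L.IsCountablyGenerated]
    (hf : ∀ s ∈ L, {n | f n ∉ s} ∈ I) : ∃ B ∈ I, Tendsto f (cofinite ⊓ 𝓟 Bᶜ) L := by
  obtain ⟨U, hU⟩ := L.exists_antitone_basis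
  obtain ⟨B, hBI, hB⟩ := hI.2 (fun k => {n | f n ∉ U k}) fun k => hf _ (hU.mem k)
  refine ⟨B, hBI, hU.1.tendsto_right_iff.2 fun k _ => mem_inf_principal.2 ?_⟩
  exact (hB k).subset fun n hn => ⟨fun hn' => hn fun _ => hn', fun hnB => hn (absurd hnB ·)⟩

theorem stmt3 {X : Type*} [TopologicalSpace X] [FirstCountableTopology X]
    {I : Set (Set ℕ)} (hI : IsPIdeal I) {x : ℕ → X} {l : X}
    (h : IConv I x l) : IStarConv I x l := by
  obtain ⟨B, hBI, hB⟩ := hI.exists_mem_tendsto_cofinite_inf_principal_compl h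
  exact hI.1.iStarConv_of_tendsto_cofinite_inf_principal_compl hBI hB
end

section
/- Let I be a G-ideal on ω and X a topological space. A sequence (x_n) in X is I-convergent to ℓ if and only if there exists a set A ∈ I* such that, writing A = {n_1 < n_2 < ...}, the subsequence (x_{n_k})_k is I-convergent to ℓ. -/
open Filter Topology

variable {X : Type*} [TopologicalSpace X]

theorem IsIdeal.empty_mem {I : Set (Set ℕ)} (hI : IsIdeal I) : ∅ ∈ I :=
  hI.1 (hI.2.2.1 0) (Set.empty_subset _)

theorem IConv.of_comp_strictMono {I : Set (Set ℕ)} (hI : IsGIdeal I) {x : ℕ → X} {l : X}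
    {e : ℕ → ℕ} (he : StrictMono e) (hre : (Set.range e)ᶜ ∈ I) (h : IConv I (x ∘ e) l) :
    IConv I x l := by
  intro U hU
  -- The G-property carries the `I*`-set of good indices of the subsequence into `I*`.
  have hgood : (e '' {k | x (e k) ∈ U})ᶜ ∈ I := (hI.2 e he hre _).mpr (h U hU)
  refine hI.1.1 hgood ?_
  rintro n hn ⟨k, hk, rfl⟩
  exact hn hk

theorem stmt4 {X : Type*} [TopologicalSpace X] {I : Set (Set ℕ)} (hI : IsGIdeal I)
    {x : ℕ → X} {l : X} :
    IConv I x l ↔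
      ∃ e : ℕ → ℕ, StrictMono e ∧ (Set.range e)ᶜ ∈ I ∧ IConv I (x ∘ e) l := by
  refine ⟨fun h => ⟨id, strictMono_id, ?_, h⟩,
    fun ⟨e, he, hre, h⟩ => h.of_comp_strictMono hI he hre⟩
  simpa only [Set.range_id, Set.compl_univ] using hI.1.empty_mem
end

section
/- Let I be a P-ideal on ω, G a metrizable topological additive group, and (x_n) a sequence in G that is I-convergent to ℓ. Then there exist sequences (y_n) and (z_n) in G such that x_n = y_n + z_n for all n, (y_n) converges to ℓ in the ordinary sense, and {n : z_n ≠ 0} ∈ I. -/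
open Filter Topology

variable {X : Type*} [TopologicalSpace X]

/- Apply the P-property to the exceptional sets `{n | x n ∉ U k}` of a countable antitone
neighbourhood basis `U` of `l`: a single `B ∈ I` almost contains all of them, so off `B` the
sequence eventually enters every `U k`. -/
open Classical in
theorem IConv.exists_mem_tendsto_piecewise [FirstCountableTopology X] {I : Set (Set ℕ)}
    (hI : IsPIdeal I) {x : ℕ → X} {l : X} (h : IConv I x l) :
    ∃ B ∈ I, Tendsto (B.piecewise (fun _ => l) x) atTop (𝓝 l) := by
  obtain ⟨U, hU⟩ := (𝓝 l).exists_antitone_basis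
  obtain ⟨B, hBI, hfin⟩ := hI.2 (fun k => {n | x n ∉ U k}) fun k => h _ (hU.mem k)
  refine ⟨B, hBI, hU.toHasBasis.tendsto_right_iff.2 fun k _ => ?_⟩
  rw [← Nat.cofinite_eq_atTop]
  filter_upwards [(hfin k).eventually_cofinite_notMem] with n hn
  by_cases hnB : n ∈ B
  · simpa [hnB] using mem_of_mem_nhds (hU.mem k)
  · simpa [hnB] using hn

theorem stmt5_general {G : Type*} [AddGroup G] [TopologicalSpace G]
    [TopologicalSpace.MetrizableSpace G] {I : Set (Set ℕ)} (hI : IsPIdeal I)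
    {x : ℕ → G} {l : G} (h : IConv I x l) :
    ∃ y z : ℕ → G, (∀ n, x n = y n + z n) ∧
      Filter.Tendsto y Filter.atTop (𝓝 l) ∧ {n | z n ≠ 0} ∈ I := by
  classical
  obtain ⟨B, hBI, hy⟩ := h.exists_mem_tendsto_piecewise hI
  set y := B.piecewise (fun _ => l) x
  refine ⟨y, fun n => -y n + x n, fun n => (add_neg_cancel_left _ _).symm, hy, ?_⟩
  refine hI.1.1 hBI fun n hn => ?_
  by_contra hnB
  simp [y, hnB] at hn

theorem stmt5 {G : Type*} [AddGroup G] [TopologicalSpace G] [IsTopologicalAddGroup G]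
    [TopologicalSpace.MetrizableSpace G] {I : Set (Set ℕ)} (hI : IsPIdeal I)
    {x : ℕ → G} {l : G} (h : IConv I x l) :
    ∃ y z : ℕ → G, (∀ n, x n = y n + z n) ∧
      Filter.Tendsto y Filter.atTop (𝓝 l) ∧ {n | z n ≠ 0} ∈ I :=
  stmt5_general hI h
end

section
/- Let X be a topological space, I an ideal on ω, and x, y sequences in X with {n : x_n ≠ y_n} ∈ I. Then x and y have the same I-limit points and the same I-cluster points: Λ_x(I) = Λ_y(I) and Γ_x(I) = Γ_y(I). -/
open Filter Topology

variable {X : Type*} [TopologicalSpace X]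

/-! `{n | y n ∈ U}` contains `{n | x n ∈ U}` up to a set in `I`, which transfers cluster points.
For a limit point, the index set of a convergent subsequence of `x`, minus the indices where `x`
and `y` differ, is still not in `I`; it is therefore infinite, and along it `y` runs through a
subsequence of the same convergent subsequence. -/

lemma IsIdeal.finite_mem_s9 {I : Set (Set ℕ)} (hI : IsIdeal I) {A : Set ℕ} (hA : A.Finite) :
    A ∈ I := by
  induction A, hA using Set.Finite.induction_on with
  | empty => exact hI.1 (hI.2.2.1 0) (Set.empty_subset _)
  | @insert a s _ _ ih => exact hI.2.1 (hI.2.2.1 a) ih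

lemma IsIdeal.notMem_of_subset_union {I : Set (Set ℕ)} (hI : IsIdeal I) {A B D : Set ℕ}
    (hA : A ∉ I) (hD : D ∈ I) (hAB : A ⊆ B ∪ D) : B ∉ I :=
  fun hB => hA (hI.1 (hI.2.1 hB hD) hAB)

lemma Set.Infinite.exists_strictMono_range_comp_eq {S : Set ℕ} (hS : S.Infinite) {e : ℕ → ℕ}
    (hSe : S ⊆ Set.range e) :
    ∃ g : ℕ → ℕ, StrictMono g ∧ Set.range (e ∘ g) = S := by
  have hT : (e ⁻¹' S).Infinite := Set.Infinite.preimage' (by rwa [Set.inter_eq_left.2 hSe])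
  refine ⟨Nat.nth (fun n => e n ∈ S), Nat.nth_strictMono hT, ?_⟩
  rw [Set.range_comp, Nat.range_nth_of_infinite hT]
  exact Set.image_preimage_eq_of_subset hSe

lemma iClusterPts_subset_of_setOf_ne_mem {I : Set (Set ℕ)} (hI : IsIdeal I)
    {x y : ℕ → X} (hxy : {n | x n ≠ y n} ∈ I) :
    IClusterPts I x ⊆ IClusterPts I y := by
  refine fun l hl U hU => hI.notMem_of_subset_union (hl U hU) hxy fun n hn => ?_
  by_cases h : x n = y n
  · exact Or.inl (show y n ∈ U from h ▸ hn)
  · exact Or.inr h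

lemma iLimitPts_subset_of_setOf_ne_mem {I : Set (Set ℕ)} (hI : IsIdeal I)
    {x y : ℕ → X} (hxy : {n | x n ≠ y n} ∈ I) :
    ILimitPts I x ⊆ ILimitPts I y := by
  rintro l ⟨e, he, hrange, hl⟩
  set S := Set.range e \ {n | x n ≠ y n}
  have hS : S ∉ I := hI.notMem_of_subset_union hrange hxy (Set.subset_sdiff_union _ _)
  have hS_inf : S.Infinite := fun hfin => hS (hI.finite_mem_s9 hfin)
  obtain ⟨g, hg, hgS⟩ := hS_inf.exists_strictMono_range_comp_eq Set.sdiff_subset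
  have hxy_on : y ∘ (e ∘ g) = x ∘ (e ∘ g) := funext fun n => by
    have h : e (g n) ∈ S := hgS ▸ Set.mem_range_self n
    exact (not_not.1 h.2).symm
  refine ⟨e ∘ g, he.comp hg, hgS ▸ hS, ?_⟩
  rw [hxy_on]
  exact hl.comp hg.tendsto_atTop

theorem stmt9 {X : Type*} [TopologicalSpace X] {I : Set (Set ℕ)} (hI : IsIdeal I)
    {x y : ℕ → X} (hxy : {n | x n ≠ y n} ∈ I) :
    ILimitPts I x = ILimitPts I y ∧ IClusterPts I x = IClusterPts I y := by
  have hyx : {n | y n ≠ x n} ∈ I := by simpa only [ne_comm] using hxy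
  exact ⟨(iLimitPts_subset_of_setOf_ne_mem hI hxy).antisymm
      (iLimitPts_subset_of_setOf_ne_mem hI hyx),
    (iClusterPts_subset_of_setOf_ne_mem hI hxy).antisymm
      (iClusterPts_subset_of_setOf_ne_mem hI hyx)⟩
end

section
/- Let X be a topological space, I an ideal on ω, K ⊆ X a compact set, and x a sequence in X with {n : x_n ∈ K} ∉ I. Then x has an I-cluster point belonging to K, i.e., Γ_x(I) ∩ K ≠ ∅. -/
open Filter Topology

variable {X : Type*} [TopologicalSpace X]

/-!
The complements of the members of an ideal `I` form a filter, and `l` is an `I`-cluster point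
of `x` exactly when it is a cluster point of the image of that filter under `x`. The hypothesis
on `K` says that `x n ∈ K` frequently along this filter, so compactness of `K` provides such a
cluster point inside `K`.
-/

namespace IsIdeal

variable {I : Set (Set ℕ)}

lemma empty_mem_s10 (hI : IsIdeal I) : ∅ ∈ I :=
  hI.1 (hI.2.2.1 0) (Set.empty_subset _)

def dualFilter (hI : IsIdeal I) : Filter ℕ :=
  Filter.comk (· ∈ I) hI.empty_mem_s10 (fun _ ht _ hst => hI.1 ht hst)
    (fun _ hs _ ht => hI.2.1 hs ht)

lemma mem_dualFilter (hI : IsIdeal I) {A : Set ℕ} : A ∈ hI.dualFilter ↔ Aᶜ ∈ I :=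
  Iff.rfl

lemma frequently_dualFilter_iff (hI : IsIdeal I) {p : ℕ → Prop} :
    (∃ᶠ n in hI.dualFilter, p n) ↔ {n | p n} ∉ I := by
  rw [Filter.Frequently, Filter.Eventually, hI.mem_dualFilter, Set.compl_ofPred]
  simp only [not_not]

lemma mem_iClusterPts_iff_mapClusterPt (hI : IsIdeal I) {x : ℕ → X} {l : X} :
    l ∈ IClusterPts I x ↔ MapClusterPt l hI.dualFilter x := by
  simp only [mapClusterPt_iff_frequently, hI.frequently_dualFilter_iff]
  rfl

end IsIdeal

theorem stmt10 {X : Type*} [TopologicalSpace X] {I : Set (Set ℕ)} (hI : IsIdeal I)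
    {K : Set X} (hK : IsCompact K) {x : ℕ → X} (hx : {n | x n ∈ K} ∉ I) :
    (IClusterPts I x ∩ K).Nonempty := by
  obtain ⟨l, hlK, hl⟩ :=
    hK.exists_mapClusterPt_of_frequently (hI.frequently_dualFilter_iff.mpr hx)
  exact ⟨l, hI.mem_iClusterPts_iff_mapClusterPt.mpr hl, hlK⟩
end

section
/- Let X be a Hausdorff topological space, I an ideal on ω, and x a sequence in X that is I*-convergent to ℓ. Then Λ_x(I) = Γ_x(I) = {ℓ}. -/
/-!
Let `e` index the `I*`-convergent subsequence, so `(range e)ᶜ ∈ I` and hence `range e ∉ I`.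
For any `U ∈ 𝓝 l`, all but finitely many indices of `range e` land in `U`. Consequently, a set
of indices whose terms avoid a neighbourhood of `l` lies in `(range e)ᶜ` up to a finite set, so
it belongs to `I`; with Hausdorff separation this rules out every cluster point other than `l`.
The same estimate shows that every `I`-limit point is an `I`-cluster point, and `e` itself
witnesses that `l` is an `I`-limit point.
-/

open Filter Topology

variable {X : Type*} [TopologicalSpace X]

namespace IsIdeal

variable {I : Set (Set ℕ)}

theorem mem_of_subset_union (hI : IsIdeal I) {A B C : Set ℕ} (hA : A ∈ I) (hB : B ∈ I)
    (hC : C ⊆ A ∪ B) : C ∈ I :=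
  hI.1 (hI.2.1 hA hB) hC

theorem notMem_of_compl_mem (hI : IsIdeal I) {A : Set ℕ} (hA : Aᶜ ∈ I) : A ∉ I :=
  fun hA' => hI.2.2.2 (hI.mem_of_subset_union hA' hA (Set.union_compl_self A).ge)

end IsIdeal

variable {I : Set (Set ℕ)} {x : ℕ → X}

theorem finite_range_diff_preimage_of_tendsto {e : ℕ → ℕ} {l : X}
    (he : Tendsto (x ∘ e) atTop (𝓝 l)) {U : Set X} (hU : U ∈ 𝓝 l) :
    (Set.range e \ x ⁻¹' U).Finite := by
  have hfin : {k | x (e k) ∉ U}.Finite := by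
    simpa only [← Nat.cofinite_eq_atTop, eventually_cofinite, Function.comp_apply]
      using he.eventually_mem hU
  refine (hfin.image e).subset ?_
  rintro _ ⟨⟨k, rfl⟩, hk⟩
  exact ⟨k, hk, rfl⟩

theorem mem_IClusterPts_of_tendsto_comp (hI : IsIdeal I) {e : ℕ → ℕ} {l : X}
    (hrange : Set.range e ∉ I) (he : Tendsto (x ∘ e) atTop (𝓝 l)) : l ∈ IClusterPts I x :=
  fun U hU hxU => hrange <| hI.mem_of_subset_union hxU
    (hI.finite_mem (finite_range_diff_preimage_of_tendsto he hU)) fun n hn => by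
      by_cases h : x n ∈ U
      · exact Or.inl h
      · exact Or.inr ⟨hn, h⟩

theorem ILimitPts_subset_IClusterPts (hI : IsIdeal I) : ILimitPts I x ⊆ IClusterPts I x :=
  fun _ ⟨_, _, hrange, he⟩ => mem_IClusterPts_of_tendsto_comp hI hrange he

theorem IStarConv.mem_ILimitPts (hI : IsIdeal I) {l : X} (h : IStarConv I x l) :
    l ∈ ILimitPts I x :=
  let ⟨e, hmono, hcompl, he⟩ := h
  ⟨e, hmono, hI.notMem_of_compl_mem hcompl, he⟩

theorem IStarConv.IClusterPts_subset [T2Space X] (hI : IsIdeal I) {l : X}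
    (h : IStarConv I x l) : IClusterPts I x ⊆ {l} := by
  intro l' hl'
  by_contra hne
  obtain ⟨e, -, hcompl, he⟩ := h
  obtain ⟨U, V, hU, hV, hl'U, hlV, hUV⟩ := t2_separation hne
  refine hl' U (hU.mem_nhds hl'U) (hI.mem_of_subset_union hcompl
    (hI.finite_mem (finite_range_diff_preimage_of_tendsto he (hV.mem_nhds hlV))) ?_)
  intro n hn
  by_cases h : n ∈ Set.range e
  · exact Or.inr ⟨h, fun hnV => hUV.ne_of_mem hn hnV rfl⟩
  · exact Or.inl h

theorem stmt11 {X : Type*} [TopologicalSpace X] [T2Space X] {I : Set (Set ℕ)}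
    (hI : IsIdeal I) {x : ℕ → X} {l : X} (h : IStarConv I x l) :
    ILimitPts I x = {l} ∧ IClusterPts I x = {l} := by
  have hcluster : IClusterPts I x ⊆ {l} := h.IClusterPts_subset hI
  have hlimit : l ∈ ILimitPts I x := h.mem_ILimitPts hI
  have hsubset : ILimitPts I x ⊆ IClusterPts I x := ILimitPts_subset_IClusterPts hI
  exact ⟨(hsubset.trans hcluster).antisymm (Set.singleton_subset_iff.mpr hlimit),
    hcluster.antisymm (Set.singleton_subset_iff.mpr (hsubset hlimit))⟩
end

section
/- Let I be a P-ideal on ω, X a first countable Hausdorff space, and x a sequence in X that is I-convergent to ℓ. Then Λ_x(I) = Γ_x(I) = {ℓ}. -/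
open Filter Topology

variable {X : Type*} [TopologicalSpace X]

/-!
Hausdorffness puts every `I`-cluster point at `l`, since a neighbourhood disjoint from one of `l`
is visited only on a set in `I`; and every `I`-limit point is an `I`-cluster point. Conversely,
for a countable decreasing basis `U k` at `l` the exceptional sets `{n | x n ∉ U k}` lie in `I`,
so the P-ideal property gives one `B ∈ I` almost containing all of them: the subsequence
enumerating `Bᶜ` then converges to `l` and is indexed by a set outside `I`.
-/

namespace IsIdeal

variable {I : Set (Set ℕ)}

theorem compl_notMem (hI : IsIdeal I) {A : Set ℕ} (hA : A ∈ I) : Aᶜ ∉ I := fun hAc =>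
  hI.2.2.2 (Set.union_compl_self A ▸ hI.2.1 hA hAc)

variable {x : ℕ → X}

theorem iLimitPts_subset_iClusterPts (hI : IsIdeal I) : ILimitPts I x ⊆ IClusterPts I x := by
  rintro l' ⟨e, -, hrange, htend⟩ U hU hUI
  obtain ⟨N, hN⟩ := (htend.eventually_mem hU).exists_forall_of_atTop
  refine hrange (hI.1 (hI.2.1 (hI.finite_mem ((Set.finite_Iio N).image e)) hUI) ?_)
  rintro _ ⟨m, rfl⟩
  rcases lt_or_ge m N with hm | hm
  · exact Or.inl ⟨m, hm, rfl⟩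
  · exact Or.inr (hN m hm)

theorem iClusterPts_subset_singleton_of_iConv [T2Space X] (hI : IsIdeal I) {l : X}
    (h : IConv I x l) : IClusterPts I x ⊆ {l} := by
  intro l' hl'
  by_contra hne
  obtain ⟨U, V, hUo, hVo, hl'U, hlV, hUV⟩ := t2_separation (hne : l' ≠ l)
  exact hl' U (hUo.mem_nhds hl'U) (hI.1 (h V (hVo.mem_nhds hlV))
    fun n hn hV => Set.disjoint_left.mp hUV hn hV)

theorem mem_iLimitPts_of_iStarConv (hI : IsIdeal I) {l : X} (h : IStarConv I x l) :
    l ∈ ILimitPts I x := by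
  obtain ⟨e, he, hrange, htend⟩ := h
  exact ⟨e, he, fun hr => hI.compl_notMem hr hrange, htend⟩

end IsIdeal

theorem IsPIdeal.iStarConv_of_iConv [FirstCountableTopology X] {I : Set (Set ℕ)}
    (hI : IsPIdeal I) {x : ℕ → X} {l : X} (h : IConv I x l) : IStarConv I x l := by
  obtain ⟨U, hU⟩ := (𝓝 l).exists_antitone_basis
  obtain ⟨B, hB, hBfin⟩ := hI.2 (fun k => {n | x n ∉ U k}) fun k => h (U k) (hU.mem k)
  have hBc : Bᶜ ∉ I := hI.1.compl_notMem hB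
  have hBcinf : Bᶜ.Infinite := fun hfin => hBc (hI.1.finite_mem hfin)
  set e := Nat.nth (· ∈ Bᶜ)
  have he : StrictMono e := Nat.nth_strictMono hBcinf
  have hrange : Set.range e = Bᶜ := Nat.range_nth_of_infinite hBcinf
  refine ⟨e, he, by rwa [hrange, compl_compl], hU.toHasBasis.tendsto_right_iff.2 fun k _ => ?_⟩
  have hbad : {m | x (e m) ∉ U k}.Finite :=
    ((hBfin k).preimage he.injective.injOn).subset fun m hm =>
      ⟨hm, (hrange ▸ Set.mem_range_self m : e m ∈ Bᶜ)⟩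
  simpa [← Nat.cofinite_eq_atTop] using hbad.eventually_cofinite_notMem

theorem stmt12 {X : Type*} [TopologicalSpace X] [T2Space X]
    [FirstCountableTopology X] {I : Set (Set ℕ)} (hI : IsPIdeal I)
    {x : ℕ → X} {l : X} (h : IConv I x l) :
    ILimitPts I x = {l} ∧ IClusterPts I x = {l} := by
  have hΛΓ := hI.1.iLimitPts_subset_iClusterPts (x := x)
  have hΓ := hI.1.iClusterPts_subset_singleton_of_iConv h
  have hlΛ : l ∈ ILimitPts I x := hI.1.mem_iLimitPts_of_iStarConv (hI.iStarConv_of_iConv h)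
  exact ⟨(hΛΓ.trans hΓ).antisymm (Set.singleton_subset_iff.2 hlΛ),
    hΓ.antisymm (Set.singleton_subset_iff.2 (hΛΓ hlΛ))⟩
end

section
/- Let X be a topological additive group, I an ideal on ω, and x, y sequences in X such that the sequence (x_n − y_n) is I-convergent to 0. Then x and y have the same I-cluster points: Γ_x(I) = Γ_y(I). -/
open Filter Topology

variable {X : Type*} [TopologicalSpace X]

theorem IsIdeal.mem_of_subset_union_s15 {I : Set (Set ℕ)} (hI : IsIdeal I) {A B C : Set ℕ}
    (hB : B ∈ I) (hC : C ∈ I) (hA : A ⊆ B ∪ C) : A ∈ I :=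
  hI.1 (hI.2.1 hB hC) hA

theorem IConv.neg {X : Type*} [TopologicalSpace X] [InvolutiveNeg X] [ContinuousNeg X]
    {I : Set (Set ℕ)} {x : ℕ → X} {l : X} (h : IConv I x l) :
    IConv I (fun n => -x n) (-l) :=
  fun _ hU => h _ (continuous_neg.continuousAt hU)

theorem iClusterPts_subset_of_iConv_sub {X : Type*} [AddGroup X] [TopologicalSpace X]
    [IsTopologicalAddGroup X] {I : Set (Set ℕ)} (hI : IsIdeal I) {x y : ℕ → X}
    (h : IConv I (fun n => x n - y n) 0) :
    IClusterPts I x ⊆ IClusterPts I y := by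
  intro l hl U hU hyU
  have hsub : (fun p : X × X => -p.2 + p.1) ⁻¹' U ∈ 𝓝 (l, 0) :=
    (continuous_snd.neg.add continuous_fst).continuousAt (by simpa using hU)
  obtain ⟨V, hV, W, hW, hVW⟩ := mem_nhds_prod_iff.mp hsub
  -- `y n = -(x n - y n) + x n`, so `x n ∈ V` forces `y n ∈ U` unless `x n - y n ∉ W`.
  refine hl V hV (hI.mem_of_subset_union_s15 hyU (h W hW) fun n hn => ?_)
  by_cases hw : x n - y n ∈ W
  · left
    simpa using hVW (Set.mk_mem_prod hn hw)
  · exact Or.inr hw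

theorem stmt15 {X : Type*} [AddGroup X] [TopologicalSpace X] [IsTopologicalAddGroup X]
    {I : Set (Set ℕ)} (hI : IsIdeal I) {x y : ℕ → X}
    (h : IConv I (fun n => x n - y n) 0) :
    IClusterPts I x = IClusterPts I y := by
  have h' : IConv I (fun n => y n - x n) 0 := by simpa using h.neg
  exact (iClusterPts_subset_of_iConv_sub hI h).antisymm (iClusterPts_subset_of_iConv_sub hI h')
end
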